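/- arXiv:math/0401419 — 4 statements merged into one kernel-verified Lean document; each statement's English description precedes it below -/
import Mathlib

section
/- Energy identity for the model Dirac operator on a product: let H₁ and H₂ be real Hilbert spaces, S : H₁ → H₂ a continuous linear map with adjoint S*, and ε > 0. Let u : ℝ → H₁ and v : ℝ → H₂ be continuously differentiable on [0, ε] with v(0) = v(ε) = 0. Then ∫₀^ε ( ‖u'(t) + S* v(t)‖² + ‖v'(t) + S u(t)‖² ) dt = ∫₀^ε ( ‖u'(t)‖² + ‖v'(t)‖² + ‖S* v(t)‖² + ‖S u(t)‖² ) dt. -/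
open scoped RealInnerProductSpace

/-- Energy identity for the model Dirac operator on a product: for `S : H₁ →L H₂` with
adjoint `Sstar`, and paths `u`, `v` continuously differentiable on `[0, ε]` with
`v 0 = v ε = 0`, the L²-norm squared of the Dirac operator applied to `(u, v)` equals
the sum of the squares of the individual terms. -/
theorem dirac_energy_identity
    {H₁ H₂ : Type*} [NormedAddCommGroup H₁] [InnerProductSpace ℝ H₁] [CompleteSpace H₁]
    [NormedAddCommGroup H₂] [InnerProductSpace ℝ H₂] [CompleteSpace H₂]
    (S : H₁ →L[ℝ] H₂) (Sstar : H₂ →L[ℝ] H₁)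
    (hadj : ∀ (w : H₁) (y : H₂), ⟪S w, y⟫ = ⟪w, Sstar y⟫)
    (ε : ℝ) (hε : 0 < ε)
    (u u' : ℝ → H₁) (v v' : ℝ → H₂)
    (hu : ∀ t ∈ Set.Icc (0 : ℝ) ε, HasDerivWithinAt u (u' t) (Set.Icc 0 ε) t)
    (hu' : ContinuousOn u' (Set.Icc 0 ε))
    (hv : ∀ t ∈ Set.Icc (0 : ℝ) ε, HasDerivWithinAt v (v' t) (Set.Icc 0 ε) t)
    (hv' : ContinuousOn v' (Set.Icc 0 ε))
    (hv0 : v 0 = 0) (hvε : v ε = 0) :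
    ∫ t in (0:ℝ)..ε, (‖u' t + Sstar (v t)‖ ^ 2 + ‖v' t + S (u t)‖ ^ 2)
      = ∫ t in (0:ℝ)..ε,
          (‖u' t‖ ^ 2 + ‖v' t‖ ^ 2 + ‖Sstar (v t)‖ ^ 2 + ‖S (u t)‖ ^ 2) := by
  have hεle : (0:ℝ) ≤ ε := hε.le
  have hIcc : Set.uIcc (0:ℝ) ε = Set.Icc 0 ε := Set.uIcc_of_le hεle
  have hucont : ContinuousOn u (Set.Icc 0 ε) :=
    fun t ht => (hu t ht).continuousWithinAt
  have hvcont : ContinuousOn v (Set.Icc 0 ε) :=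
    fun t ht => (hv t ht).continuousWithinAt
  -- f t = ⟪S (u t), v t⟫
  set f : ℝ → ℝ := fun t => ⟪S (u t), v t⟫ with hf
  have hfderiv : ∀ t ∈ Set.Icc (0:ℝ) ε,
      HasDerivWithinAt f (⟪S (u t), v' t⟫ + ⟪S (u' t), v t⟫) (Set.Icc 0 ε) t := by
    intro t ht
    have hSu : HasDerivWithinAt (fun s => S (u s)) (S (u' t)) (Set.Icc 0 ε) t :=
      (S.hasFDerivAt.comp_hasDerivWithinAt t (hu t ht))
    exact hSu.inner ℝ (hv t ht)
  have hfcont : ContinuousOn f (Set.Icc 0 ε) := by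
    apply ContinuousOn.inner
    · exact S.continuous.comp_continuousOn hucont
    · exact hvcont
  have hg_cont : ContinuousOn (fun t => ⟪S (u t), v' t⟫ + ⟪S (u' t), v t⟫) (Set.Icc 0 ε) :=
    ((S.continuous.comp_continuousOn hucont).inner hv').add
      ((S.continuous.comp_continuousOn hu').inner hvcont)
  have hint : IntervalIntegrable (fun t => ⟪S (u t), v' t⟫ + ⟪S (u' t), v t⟫) MeasureTheory.volume 0 ε := by
    exact (hg_cont.mono (by rw [hIcc])).intervalIntegrable
  have hFTC : ∫ t in (0:ℝ)..ε, (⟪S (u t), v' t⟫ + ⟪S (u' t), v t⟫) = 0 := by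
    rw [intervalIntegral.integral_eq_sub_of_hasDerivAt_of_le hεle hfcont
      (fun t ht => (hfderiv t (Set.mem_Icc_of_Ioo ht)).hasDerivAt
        (Icc_mem_nhds ht.1 ht.2)) hint]
    simp [hf, hv0, hvε]
  -- integrability of pieces
  have hSu' : ContinuousOn (fun t => ‖u' t‖^2 + ‖v' t‖^2 + ‖Sstar (v t)‖^2 + ‖S (u t)‖^2)
      (Set.Icc 0 ε) := by
    apply ContinuousOn.add
    apply ContinuousOn.add
    apply ContinuousOn.add
    · exact (hu'.norm).pow 2
    · exact (hv'.norm).pow 2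
    · exact ((Sstar.continuous.comp_continuousOn hvcont).norm).pow 2
    · exact ((S.continuous.comp_continuousOn hucont).norm).pow 2
  have hintR : IntervalIntegrable
      (fun t => ‖u' t‖^2 + ‖v' t‖^2 + ‖Sstar (v t)‖^2 + ‖S (u t)‖^2)
      MeasureTheory.volume 0 ε := (hSu'.mono (by rw [hIcc])).intervalIntegrable
  have key : ∀ t, ‖u' t + Sstar (v t)‖ ^ 2 + ‖v' t + S (u t)‖ ^ 2
      = (‖u' t‖ ^ 2 + ‖v' t‖ ^ 2 + ‖Sstar (v t)‖ ^ 2 + ‖S (u t)‖ ^ 2)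
        + 2 * (⟪S (u t), v' t⟫ + ⟪S (u' t), v t⟫) := by
    intro t
    have h1 : ⟪u' t, Sstar (v t)⟫ = ⟪S (u' t), v t⟫ := (hadj (u' t) (v t)).symm
    have h2 : ⟪v' t, S (u t)⟫ = ⟪S (u t), v' t⟫ := real_inner_comm _ _
    rw [norm_add_sq_real, norm_add_sq_real, h1, h2]
    ring
  calc ∫ t in (0:ℝ)..ε, (‖u' t + Sstar (v t)‖ ^ 2 + ‖v' t + S (u t)‖ ^ 2)
      = ∫ t in (0:ℝ)..ε, ((‖u' t‖ ^ 2 + ‖v' t‖ ^ 2 + ‖Sstar (v t)‖ ^ 2 + ‖S (u t)‖ ^ 2)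
          + 2 * (⟪S (u t), v' t⟫ + ⟪S (u' t), v t⟫)) := by
        simp only [key]
    _ = (∫ t in (0:ℝ)..ε, (‖u' t‖ ^ 2 + ‖v' t‖ ^ 2 + ‖Sstar (v t)‖ ^ 2 + ‖S (u t)‖ ^ 2))
          + ∫ t in (0:ℝ)..ε, 2 * (⟪S (u t), v' t⟫ + ⟪S (u' t), v t⟫) := by
        exact intervalIntegral.integral_add hintR (hint.const_mul 2)
    _ = ∫ t in (0:ℝ)..ε, (‖u' t‖ ^ 2 + ‖v' t‖ ^ 2 + ‖Sstar (v t)‖ ^ 2 + ‖S (u t)‖ ^ 2) := by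
        rw [intervalIntegral.integral_const_mul, hFTC]
        ring
end

section
/- Eigenvalue lower bound for the model Dirac operator: let H₁ and H₂ be real Hilbert spaces, S : H₁ → H₂ a continuous linear map with adjoint S*, ε > 0, and λ ≥ 0 a constant such that λ‖w‖² ≤ ‖S w‖² for all w ∈ H₁. Let u : ℝ → H₁ and v : ℝ → H₂ be continuously differentiable on [0, ε] with v(0) = v(ε) = 0. Then ∫₀^ε ( ‖u'(t) + S* v(t)‖² + ‖v'(t) + S u(t)‖² ) dt ≥ min(λ, 2/ε²) · ∫₀^ε ( ‖u(t)‖² + ‖v(t)‖² ) dt. -/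
open scoped RealInnerProductSpace

open Set MeasureTheory

private lemma cs_interval {t : ℝ} (ht : 0 ≤ t) {f : ℝ → ℝ}
    (hf : ContinuousOn f (Set.Icc 0 t)) :
    (∫ s in (0:ℝ)..t, f s) ^ 2 ≤ t * ∫ s in (0:ℝ)..t, f s ^ 2 := by
  rcases eq_or_lt_of_le ht with rfl | ht'
  · simp
  · have hfi : IntervalIntegrable f volume 0 t :=
      ContinuousOn.intervalIntegrable (by rwa [Set.uIcc_of_le ht])
    have hfsq : IntervalIntegrable (fun s => f s ^ 2) volume 0 t :=
      ContinuousOn.intervalIntegrable (by rw [Set.uIcc_of_le ht]; exact hf.pow 2)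
    set A := ∫ s in (0:ℝ)..t, f s with hA
    set B := ∫ s in (0:ℝ)..t, f s ^ 2 with hB
    have key : 0 ≤ ∫ s in (0:ℝ)..t, (f s - A / t) ^ 2 :=
      intervalIntegral.integral_nonneg ht (fun s _ => sq_nonneg _)
    have h2 : ∫ s in (0:ℝ)..t, (f s - A / t) ^ 2
        = B - 2 * (A / t) * A + (A / t) ^ 2 * t := by
      have e : (fun s => (f s - A / t) ^ 2)
          = fun s => f s ^ 2 - (2 * (A / t)) * f s + (A / t) ^ 2 := by
        funext s; ring
      rw [e, intervalIntegral.integral_add ((hfsq.sub (hfi.const_mul _)))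
            intervalIntegrable_const,
          intervalIntegral.integral_sub hfsq (hfi.const_mul _),
          intervalIntegral.integral_const_mul, intervalIntegral.integral_const]
      simp only [smul_eq_mul, ← hA, ← hB]
      ring
    rw [h2] at key
    have e2 : B - 2 * (A / t) * A + (A / t) ^ 2 * t = B - A ^ 2 / t := by
      field_simp; ring
    rw [e2] at key
    have : A ^ 2 / t ≤ B := by linarith
    rw [div_le_iff₀ ht'] at this
    linarith [this, mul_comm B t]

/-- Eigenvalue lower bound for the model Dirac operator: if `λ‖w‖² ≤ ‖S w‖²` for all `w`,
and `u`, `v` are continuously differentiable on `[0, ε]` with `v 0 = v ε = 0`, then the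
L²-norm squared of the Dirac operator applied to `(u, v)` is at least
`min(λ, 2/ε²)` times the L²-norm squared of `(u, v)`. -/
theorem dirac_eigenvalue_lower_bound
    {H₁ H₂ : Type*} [NormedAddCommGroup H₁] [InnerProductSpace ℝ H₁] [CompleteSpace H₁]
    [NormedAddCommGroup H₂] [InnerProductSpace ℝ H₂] [CompleteSpace H₂]
    (S : H₁ →L[ℝ] H₂) (Sstar : H₂ →L[ℝ] H₁)
    (hadj : ∀ (w : H₁) (y : H₂), ⟪S w, y⟫ = ⟪w, Sstar y⟫)
    (ε : ℝ) (hε : 0 < ε)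
    (lam : ℝ) (hlam : 0 ≤ lam)
    (hlow : ∀ w : H₁, lam * ‖w‖ ^ 2 ≤ ‖S w‖ ^ 2)
    (u u' : ℝ → H₁) (v v' : ℝ → H₂)
    (hu : ∀ t ∈ Set.Icc (0 : ℝ) ε, HasDerivWithinAt u (u' t) (Set.Icc 0 ε) t)
    (hu' : ContinuousOn u' (Set.Icc 0 ε))
    (hv : ∀ t ∈ Set.Icc (0 : ℝ) ε, HasDerivWithinAt v (v' t) (Set.Icc 0 ε) t)
    (hv' : ContinuousOn v' (Set.Icc 0 ε))
    (hv0 : v 0 = 0) (hvε : v ε = 0) :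
    min lam (2 / ε ^ 2) * ∫ t in (0:ℝ)..ε, (‖u t‖ ^ 2 + ‖v t‖ ^ 2)
      ≤ ∫ t in (0:ℝ)..ε, (‖u' t + Sstar (v t)‖ ^ 2 + ‖v' t + S (u t)‖ ^ 2) := by
  have hIcc : Set.uIcc (0:ℝ) ε = Set.Icc 0 ε := Set.uIcc_of_le hε.le
  have hcu : ContinuousOn u (Set.Icc 0 ε) := fun t ht => (hu t ht).continuousWithinAt
  have hcv : ContinuousOn v (Set.Icc 0 ε) := fun t ht => (hv t ht).continuousWithinAt
  have hcSu : ContinuousOn (fun t => S (u t)) (Set.Icc 0 ε) :=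
    S.continuous.comp_continuousOn hcu
  have hcSv : ContinuousOn (fun t => Sstar (v t)) (Set.Icc 0 ε) :=
    Sstar.continuous.comp_continuousOn hcv
  -- helper for integrability
  have mkII : ∀ {f : ℝ → ℝ}, ContinuousOn f (Set.Icc 0 ε) →
      IntervalIntegrable f volume 0 ε := fun h =>
    ContinuousOn.intervalIntegrable (by rwa [hIcc])
  have iu2 : IntervalIntegrable (fun t => ‖u t‖ ^ 2) volume 0 ε := mkII (hcu.norm.pow 2)
  have iv2 : IntervalIntegrable (fun t => ‖v t‖ ^ 2) volume 0 ε := mkII (hcv.norm.pow 2)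
  have iu'2 : IntervalIntegrable (fun t => ‖u' t‖ ^ 2) volume 0 ε := mkII (hu'.norm.pow 2)
  have iv'2 : IntervalIntegrable (fun t => ‖v' t‖ ^ 2) volume 0 ε := mkII (hv'.norm.pow 2)
  have iSu2 : IntervalIntegrable (fun t => ‖S (u t)‖ ^ 2) volume 0 ε := mkII (hcSu.norm.pow 2)
  have iSv2 : IntervalIntegrable (fun t => ‖Sstar (v t)‖ ^ 2) volume 0 ε :=
    mkII (hcSv.norm.pow 2)
  -- the cross term
  set C : ℝ → ℝ := fun t => ⟪S (u t), v' t⟫ + ⟪S (u' t), v t⟫ with hC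
  have hCcont : ContinuousOn C (Set.Icc 0 ε) :=
    (hcSu.inner hv').add ((S.continuous.comp_continuousOn hu').inner hcv)
  have iC : IntervalIntegrable C volume 0 ε := mkII hCcont
  have hderiv : ∀ t ∈ Set.Icc (0:ℝ) ε,
      HasDerivWithinAt (fun t => ⟪S (u t), v t⟫) (C t) (Set.Icc 0 ε) t := by
    intro t ht
    have hSu : HasDerivWithinAt (fun t => S (u t)) (S (u' t)) (Set.Icc 0 ε) t :=
      (S.hasFDerivAt).comp_hasDerivWithinAt t (hu t ht)
    exact hSu.inner ℝ (hv t ht)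
  have hcross : ∫ t in (0:ℝ)..ε, C t = 0 := by
    have := intervalIntegral.integral_eq_sub_of_hasDeriv_right_of_le hε.le
      (fun t ht => ((hderiv t ht).continuousWithinAt))
      (fun x hx => (hderiv x (Set.Ioo_subset_Icc_self hx)).mono_of_mem_nhdsWithin
        (Icc_mem_nhdsGT_of_mem ⟨hx.1.le, hx.2⟩))
      iC
    rw [this, hvε, hv0]
    simp
  -- pointwise expansion
  have hexp : (fun t => ‖u' t + Sstar (v t)‖ ^ 2 + ‖v' t + S (u t)‖ ^ 2)
      = fun t => (‖u' t‖ ^ 2 + ‖Sstar (v t)‖ ^ 2 + ‖v' t‖ ^ 2 + ‖S (u t)‖ ^ 2) + 2 * C t := by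
    funext t
    rw [norm_add_sq_real, norm_add_sq_real]
    have e1 : ⟪u' t, Sstar (v t)⟫ = ⟪S (u' t), v t⟫ := (hadj _ _).symm
    have e2 : ⟪v' t, S (u t)⟫ = ⟪S (u t), v' t⟫ := real_inner_comm _ _
    rw [e1, e2, hC]
    ring
  have hsum : IntervalIntegrable
      (fun t => ‖u' t‖ ^ 2 + ‖Sstar (v t)‖ ^ 2 + ‖v' t‖ ^ 2 + ‖S (u t)‖ ^ 2) volume 0 ε :=
    ((iu'2.add iSv2).add iv'2).add iSu2
  have hRHS : ∫ t in (0:ℝ)..ε, (‖u' t + Sstar (v t)‖ ^ 2 + ‖v' t + S (u t)‖ ^ 2)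
      = ∫ t in (0:ℝ)..ε,
        (‖u' t‖ ^ 2 + ‖Sstar (v t)‖ ^ 2 + ‖v' t‖ ^ 2 + ‖S (u t)‖ ^ 2) := by
    rw [hexp, intervalIntegral.integral_add hsum (iC.const_mul 2),
      intervalIntegral.integral_const_mul, hcross]
    ring
  -- Poincaré inequality: ∫‖v‖² ≤ ε²/2 ∫‖v'‖²
  have hv'2nonneg : 0 ≤ ∫ t in (0:ℝ)..ε, ‖v' t‖ ^ 2 :=
    intervalIntegral.integral_nonneg hε.le (fun t _ => sq_nonneg _)
  have hpoin : ∫ t in (0:ℝ)..ε, ‖v t‖ ^ 2 ≤ ε ^ 2 / 2 * ∫ t in (0:ℝ)..ε, ‖v' t‖ ^ 2 := by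
    have hpt : ∀ t ∈ Set.Icc (0:ℝ) ε,
        ‖v t‖ ^ 2 ≤ t * ∫ s in (0:ℝ)..ε, ‖v' s‖ ^ 2 := by
      intro t ht
      have hsub : Set.Icc (0:ℝ) t ⊆ Set.Icc 0 ε := Set.Icc_subset_Icc le_rfl ht.2
      have iv't : IntervalIntegrable v' volume 0 t :=
        ContinuousOn.intervalIntegrable (by rw [Set.uIcc_of_le ht.1]; exact hv'.mono hsub)
      have hft : ∫ s in (0:ℝ)..t, v' s = v t - v 0 := by
        refine intervalIntegral.integral_eq_sub_of_hasDeriv_right_of_le ht.1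
          (hcv.mono hsub) (fun x hx => ?_) iv't
        exact (hv x (hsub (Set.Ioo_subset_Icc_self hx))).mono_of_mem_nhdsWithin
          (Icc_mem_nhdsGT_of_mem ⟨hx.1.le, hx.2.trans_le ht.2⟩)
      rw [hv0, sub_zero] at hft
      have h1 : ‖v t‖ ≤ ∫ s in (0:ℝ)..t, ‖v' s‖ := by
        rw [← hft]; exact intervalIntegral.norm_integral_le_integral_norm ht.1
      have h2 : (∫ s in (0:ℝ)..t, ‖v' s‖) ^ 2 ≤ t * ∫ s in (0:ℝ)..t, ‖v' s‖ ^ 2 :=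
        cs_interval ht.1 ((hv'.mono hsub).norm)
      have h3 : ∫ s in (0:ℝ)..t, ‖v' s‖ ^ 2 ≤ ∫ s in (0:ℝ)..ε, ‖v' s‖ ^ 2 :=
        intervalIntegral.integral_mono_interval le_rfl ht.1 ht.2
          (Filter.Eventually.of_forall (fun s => sq_nonneg _)) iv'2
      have h4 : ‖v t‖ ^ 2 ≤ (∫ s in (0:ℝ)..t, ‖v' s‖) ^ 2 :=
        pow_le_pow_left₀ (norm_nonneg _) h1 2
      calc ‖v t‖ ^ 2 ≤ t * ∫ s in (0:ℝ)..t, ‖v' s‖ ^ 2 := h4.trans h2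
      _ ≤ t * ∫ s in (0:ℝ)..ε, ‖v' s‖ ^ 2 := mul_le_mul_of_nonneg_left h3 ht.1
    have hmono : ∫ t in (0:ℝ)..ε, ‖v t‖ ^ 2
        ≤ ∫ t in (0:ℝ)..ε, t * ∫ s in (0:ℝ)..ε, ‖v' s‖ ^ 2 :=
      intervalIntegral.integral_mono_on hε.le iv2
        ((continuous_id.mul continuous_const).intervalIntegrable _ _) hpt
    have hval : ∫ t in (0:ℝ)..ε, t * ∫ s in (0:ℝ)..ε, ‖v' s‖ ^ 2
        = ε ^ 2 / 2 * ∫ s in (0:ℝ)..ε, ‖v' s‖ ^ 2 := by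
      rw [intervalIntegral.integral_mul_const, integral_id]
      ring
    linarith [hmono, hval.le, hval.ge]
  -- lower bound for ∫‖Su‖²
  have hlowint : lam * ∫ t in (0:ℝ)..ε, ‖u t‖ ^ 2 ≤ ∫ t in (0:ℝ)..ε, ‖S (u t)‖ ^ 2 := by
    rw [← intervalIntegral.integral_const_mul]
    exact intervalIntegral.integral_mono_on hε.le (iu2.const_mul _) iSu2
      (fun t _ => hlow (u t))
  -- nonnegativity of the pieces
  have hiu : 0 ≤ ∫ t in (0:ℝ)..ε, ‖u t‖ ^ 2 :=
    intervalIntegral.integral_nonneg hε.le (fun t _ => sq_nonneg _)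
  have hiv : 0 ≤ ∫ t in (0:ℝ)..ε, ‖v t‖ ^ 2 :=
    intervalIntegral.integral_nonneg hε.le (fun t _ => sq_nonneg _)
  have hiu' : 0 ≤ ∫ t in (0:ℝ)..ε, ‖u' t‖ ^ 2 :=
    intervalIntegral.integral_nonneg hε.le (fun t _ => sq_nonneg _)
  have hiSv : 0 ≤ ∫ t in (0:ℝ)..ε, ‖Sstar (v t)‖ ^ 2 :=
    intervalIntegral.integral_nonneg hε.le (fun t _ => sq_nonneg _)
  -- put everything together
  have hsplit : ∫ t in (0:ℝ)..ε, (‖u t‖ ^ 2 + ‖v t‖ ^ 2)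
      = (∫ t in (0:ℝ)..ε, ‖u t‖ ^ 2) + ∫ t in (0:ℝ)..ε, ‖v t‖ ^ 2 :=
    intervalIntegral.integral_add iu2 iv2
  have hsplit4 : ∫ t in (0:ℝ)..ε,
      (‖u' t‖ ^ 2 + ‖Sstar (v t)‖ ^ 2 + ‖v' t‖ ^ 2 + ‖S (u t)‖ ^ 2)
      = (((∫ t in (0:ℝ)..ε, ‖u' t‖ ^ 2) + ∫ t in (0:ℝ)..ε, ‖Sstar (v t)‖ ^ 2)
        + ∫ t in (0:ℝ)..ε, ‖v' t‖ ^ 2) + ∫ t in (0:ℝ)..ε, ‖S (u t)‖ ^ 2 := by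
    rw [intervalIntegral.integral_add ((iu'2.add iSv2).add iv'2) iSu2,
      intervalIntegral.integral_add (iu'2.add iSv2) iv'2,
      intervalIntegral.integral_add iu'2 iSv2]
  have hminlam : min lam (2 / ε ^ 2) ≤ lam := min_le_left _ _
  have hminc : min lam (2 / ε ^ 2) ≤ 2 / ε ^ 2 := min_le_right _ _
  have hεsq : (0:ℝ) < ε ^ 2 := by positivity
  have hpv : (2 / ε ^ 2) * ∫ t in (0:ℝ)..ε, ‖v t‖ ^ 2 ≤ ∫ t in (0:ℝ)..ε, ‖v' t‖ ^ 2 := by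
    have := mul_le_mul_of_nonneg_left hpoin (le_of_lt (by positivity : (0:ℝ) < 2 / ε ^ 2))
    calc (2 / ε ^ 2) * ∫ t in (0:ℝ)..ε, ‖v t‖ ^ 2
        ≤ (2 / ε ^ 2) * (ε ^ 2 / 2 * ∫ t in (0:ℝ)..ε, ‖v' t‖ ^ 2) := this
      _ = ∫ t in (0:ℝ)..ε, ‖v' t‖ ^ 2 := by field_simp
  rw [hRHS, hsplit, hsplit4]
  have hmin0 : 0 ≤ min lam (2 / ε ^ 2) := le_min hlam (by positivity)
  nlinarith [mul_le_mul_of_nonneg_right hminlam hiu,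
    mul_le_mul_of_nonneg_right hminc hiv, hlowint, hpv]
end

section
/- Two-sided eigenvalue estimate for the model Dirac operator: let H₁ and H₂ be real Hilbert spaces, S : H₁ → H₂ a continuous linear map with adjoint S*, ε > 0, and λ ≥ 0 such that λ‖w‖² ≤ ‖S w‖² for all w ∈ H₁ and such that there exists u₀ ∈ H₁, u₀ ≠ 0, with S* (S u₀) = λ u₀ (i.e. λ is the first eigenvalue of S*S). Define λ_D as the infimum, over all pairs (u, v) with u : ℝ → H₁ and v : ℝ → H₂ continuously differentiable on [0, ε], v(0) = v(ε) = 0, and ∫₀^ε (‖u‖² + ‖v‖²) dt ≠ 0, of the Rayleigh quotient [∫₀^ε (‖u' + S*v‖² + ‖v' + Su‖²) dt] / [∫₀^ε (‖u‖² + ‖v‖²) dt]. Then λ ≥ λ_D ≥ min(λ, 2/ε²). In particular λ_D = λ whenever ε² ≤ 2/λ. -/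
open scoped RealInnerProductSpace

/-- Cauchy–Schwarz for interval integrals of a continuous real function against `1`. -/
lemma aux_cs (f : ℝ → ℝ) (t : ℝ) (ht : 0 ≤ t) (hf : ContinuousOn f (Set.Icc 0 t)) :
    (∫ s in (0:ℝ)..t, f s) ^ 2 ≤ t * ∫ s in (0:ℝ)..t, (f s) ^ 2 := by
  rcases ht.eq_or_lt with h | h
  · simp [← h]
  · have hne : t ≠ 0 := h.ne'
    have huIcc : Set.uIcc (0:ℝ) t = Set.Icc 0 t := Set.uIcc_of_le ht
    have hint : IntervalIntegrable f MeasureTheory.volume 0 t :=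
      hf.intervalIntegrable_of_Icc ht
    have hint2 : IntervalIntegrable (fun s => (f s) ^ 2) MeasureTheory.volume 0 t :=
      (hf.pow 2).intervalIntegrable_of_Icc ht
    set I := ∫ s in (0:ℝ)..t, f s with hI
    set J := ∫ s in (0:ℝ)..t, (f s) ^ 2 with hJ
    set c := I / t with hc
    have h0 : 0 ≤ ∫ s in (0:ℝ)..t, (f s - c) ^ 2 :=
      intervalIntegral.integral_nonneg ht (fun s _ => sq_nonneg _)
    have hexp : ∫ s in (0:ℝ)..t, (f s - c) ^ 2 = J - 2 * c * I + c ^ 2 * t := by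
      have heq : ∀ s, (f s - c) ^ 2 = (f s) ^ 2 - (2 * c) * f s + c ^ 2 := by
        intro s; ring
      calc ∫ s in (0:ℝ)..t, (f s - c) ^ 2
          = ∫ s in (0:ℝ)..t, ((f s) ^ 2 - (2 * c) * f s + c ^ 2) := by
            simp_rw [heq]
        _ = (∫ s in (0:ℝ)..t, ((f s) ^ 2 - (2 * c) * f s)) + ∫ s in (0:ℝ)..t, (c ^ 2 : ℝ) := by
            exact intervalIntegral.integral_add (hint2.sub (hint.const_mul _))
              intervalIntegrable_const
        _ = (∫ s in (0:ℝ)..t, (f s) ^ 2) - (∫ s in (0:ℝ)..t, (2 * c) * f s)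
              + ∫ s in (0:ℝ)..t, (c ^ 2 : ℝ) := by
            rw [intervalIntegral.integral_sub hint2 (hint.const_mul _)]
        _ = J - 2 * c * I + c ^ 2 * t := by
            rw [intervalIntegral.integral_const_mul, intervalIntegral.integral_const]
            simp [hI, hJ]
            ring
    have hkey : t * (J - 2 * c * I + c ^ 2 * t) = t * J - I ^ 2 := by
      rw [hc]; field_simp; ring
    have h1 : 0 ≤ t * (J - 2 * c * I + c ^ 2 * t) := by
      rw [← hexp]; exact mul_nonneg ht h0
    rw [hkey] at h1
    linarith

/-- Fundamental theorem of calculus on `[a, b]` for a function differentiable on `[a, b]`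
with continuous derivative. -/
lemma aux_ftc {E : Type*} [NormedAddCommGroup E] [NormedSpace ℝ E] [CompleteSpace E]
    {f f' : ℝ → E} {a b : ℝ} (hab : a ≤ b)
    (hf : ∀ t ∈ Set.Icc a b, HasDerivWithinAt f (f' t) (Set.Icc a b) t)
    (hf' : ContinuousOn f' (Set.Icc a b)) :
    ∫ t in a..b, f' t = f b - f a := by
  apply intervalIntegral.integral_eq_sub_of_hasDeriv_right_of_le hab
  · exact fun t ht => (hf t ht).continuousWithinAt
  · intro x hx
    exact ((hf x (Set.Ioo_subset_Icc_self hx)).hasDerivAt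
      (Icc_mem_nhds hx.1 hx.2)).hasDerivWithinAt
  · exact hf'.intervalIntegrable_of_Icc hab

/-- The key lower bound: the Rayleigh numerator dominates `min λ (2/ε²)` times the
Rayleigh denominator. -/
lemma aux_lower_bound
    {H₁ H₂ : Type*} [NormedAddCommGroup H₁] [InnerProductSpace ℝ H₁] [CompleteSpace H₁]
    [NormedAddCommGroup H₂] [InnerProductSpace ℝ H₂] [CompleteSpace H₂]
    (S : H₁ →L[ℝ] H₂) (Sstar : H₂ →L[ℝ] H₁)
    (hadj : ∀ (w : H₁) (y : H₂), ⟪S w, y⟫ = ⟪w, Sstar y⟫)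
    (ε : ℝ) (hε : 0 < ε)
    (lam : ℝ)
    (hlow : ∀ w : H₁, lam * ‖w‖ ^ 2 ≤ ‖S w‖ ^ 2)
    (u u' : ℝ → H₁) (v v' : ℝ → H₂)
    (hu : ∀ t ∈ Set.Icc (0 : ℝ) ε, HasDerivWithinAt u (u' t) (Set.Icc 0 ε) t)
    (hu' : ContinuousOn u' (Set.Icc 0 ε))
    (hv : ∀ t ∈ Set.Icc (0 : ℝ) ε, HasDerivWithinAt v (v' t) (Set.Icc 0 ε) t)
    (hv' : ContinuousOn v' (Set.Icc 0 ε))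
    (hv0 : v 0 = 0) (hvε : v ε = 0) :
    min lam (2 / ε ^ 2) * (∫ t in (0:ℝ)..ε, (‖u t‖ ^ 2 + ‖v t‖ ^ 2)) ≤
      ∫ t in (0:ℝ)..ε, (‖u' t + Sstar (v t)‖ ^ 2 + ‖v' t + S (u t)‖ ^ 2) := by
  have hε' : (0:ℝ) ≤ ε := hε.le
  have huIcc : Set.uIcc (0:ℝ) ε = Set.Icc 0 ε := Set.uIcc_of_le hε'
  -- continuity facts
  have hucont : ContinuousOn u (Set.Icc 0 ε) := fun t ht => (hu t ht).continuousWithinAt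
  have hvcont : ContinuousOn v (Set.Icc 0 ε) := fun t ht => (hv t ht).continuousWithinAt
  have hSu : ContinuousOn (fun t => S (u t)) (Set.Icc 0 ε) :=
    S.continuous.comp_continuousOn hucont
  have hSu' : ContinuousOn (fun t => S (u' t)) (Set.Icc 0 ε) :=
    S.continuous.comp_continuousOn hu'
  have hSv : ContinuousOn (fun t => Sstar (v t)) (Set.Icc 0 ε) :=
    Sstar.continuous.comp_continuousOn hvcont
  -- integrability facts
  have iu : IntervalIntegrable (fun t => ‖u t‖ ^ 2) MeasureTheory.volume 0 ε :=
    ((hucont.norm).pow 2).intervalIntegrable_of_Icc hε'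
  have iv : IntervalIntegrable (fun t => ‖v t‖ ^ 2) MeasureTheory.volume 0 ε :=
    ((hvcont.norm).pow 2).intervalIntegrable_of_Icc hε'
  have iv' : IntervalIntegrable (fun t => ‖v' t‖ ^ 2) MeasureTheory.volume 0 ε :=
    ((hv'.norm).pow 2).intervalIntegrable_of_Icc hε'
  have iA : IntervalIntegrable
      (fun t => ‖u' t‖ ^ 2 + ‖Sstar (v t)‖ ^ 2 + ‖v' t‖ ^ 2 + ‖S (u t)‖ ^ 2)
      MeasureTheory.volume 0 ε :=
    ((((((hu'.norm).pow 2).add ((hSv.norm).pow 2)).add ((hv'.norm).pow 2)).add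
      ((hSu.norm).pow 2))).intervalIntegrable_of_Icc hε'
  have icross : IntervalIntegrable
      (fun t => ⟪S (u t), v' t⟫ + ⟪S (u' t), v t⟫) MeasureTheory.volume 0 ε :=
    ((hSu.inner hv').add (hSu'.inner hvcont)).intervalIntegrable_of_Icc hε'
  -- the cross term integrates to zero
  have hg : ∀ t ∈ Set.Icc (0:ℝ) ε,
      HasDerivWithinAt (fun t => ⟪S (u t), v t⟫)
        (⟪S (u t), v' t⟫ + ⟪S (u' t), v t⟫) (Set.Icc 0 ε) t := by
    intro t ht
    have h1 : HasDerivWithinAt (fun t => S (u t)) (S (u' t)) (Set.Icc 0 ε) t :=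
      (S.hasFDerivAt).comp_hasDerivWithinAt t (hu t ht)
    exact h1.inner ℝ (hv t ht)
  have hcross : (∫ t in (0:ℝ)..ε, (⟪S (u t), v' t⟫ + ⟪S (u' t), v t⟫)) = 0 := by
    rw [aux_ftc hε' hg ((hSu.inner hv').add (hSu'.inner hvcont))]
    simp [hv0, hvε]
  -- pointwise expansion of the numerator integrand
  have hpt : ∀ t, ‖u' t + Sstar (v t)‖ ^ 2 + ‖v' t + S (u t)‖ ^ 2
      = (‖u' t‖ ^ 2 + ‖Sstar (v t)‖ ^ 2 + ‖v' t‖ ^ 2 + ‖S (u t)‖ ^ 2)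
        + 2 * (⟪S (u t), v' t⟫ + ⟪S (u' t), v t⟫) := by
    intro t
    have e1 := norm_add_sq_real (u' t) (Sstar (v t))
    have e2 := norm_add_sq_real (v' t) (S (u t))
    have e3 : ⟪u' t, Sstar (v t)⟫ = ⟪S (u' t), v t⟫ := (hadj _ _).symm
    have e4 : ⟪v' t, S (u t)⟫ = ⟪S (u t), v' t⟫ := real_inner_comm _ _
    rw [e1, e2, e3, e4]; ring
  -- numerator identity
  have hnum : (∫ t in (0:ℝ)..ε, (‖u' t + Sstar (v t)‖ ^ 2 + ‖v' t + S (u t)‖ ^ 2))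
      = ∫ t in (0:ℝ)..ε,
          (‖u' t‖ ^ 2 + ‖Sstar (v t)‖ ^ 2 + ‖v' t‖ ^ 2 + ‖S (u t)‖ ^ 2) := by
    calc (∫ t in (0:ℝ)..ε, (‖u' t + Sstar (v t)‖ ^ 2 + ‖v' t + S (u t)‖ ^ 2))
        = ∫ t in (0:ℝ)..ε,
            ((‖u' t‖ ^ 2 + ‖Sstar (v t)‖ ^ 2 + ‖v' t‖ ^ 2 + ‖S (u t)‖ ^ 2)
              + 2 * (⟪S (u t), v' t⟫ + ⟪S (u' t), v t⟫)) := by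
          simp_rw [hpt]
      _ = (∫ t in (0:ℝ)..ε,
            (‖u' t‖ ^ 2 + ‖Sstar (v t)‖ ^ 2 + ‖v' t‖ ^ 2 + ‖S (u t)‖ ^ 2))
          + ∫ t in (0:ℝ)..ε, 2 * (⟪S (u t), v' t⟫ + ⟪S (u' t), v t⟫) := by
          exact intervalIntegral.integral_add iA (icross.const_mul 2)
      _ = _ := by
          rw [intervalIntegral.integral_const_mul, hcross]; ring
  -- first lower bound on the numerator
  have hA : (∫ t in (0:ℝ)..ε, (lam * ‖u t‖ ^ 2 + ‖v' t‖ ^ 2))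
      ≤ ∫ t in (0:ℝ)..ε,
          (‖u' t‖ ^ 2 + ‖Sstar (v t)‖ ^ 2 + ‖v' t‖ ^ 2 + ‖S (u t)‖ ^ 2) := by
    apply intervalIntegral.integral_mono_on hε' ((iu.const_mul lam).add iv') iA
    intro t _
    have h1 := hlow (u t)
    have h2 : (0:ℝ) ≤ ‖u' t‖ ^ 2 := sq_nonneg _
    have h3 : (0:ℝ) ≤ ‖Sstar (v t)‖ ^ 2 := sq_nonneg _
    linarith
  have hsplit : (∫ t in (0:ℝ)..ε, (lam * ‖u t‖ ^ 2 + ‖v' t‖ ^ 2))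
      = lam * (∫ t in (0:ℝ)..ε, ‖u t‖ ^ 2) + ∫ t in (0:ℝ)..ε, ‖v' t‖ ^ 2 := by
    rw [intervalIntegral.integral_add (iu.const_mul lam) iv',
      intervalIntegral.integral_const_mul]
  -- Poincaré inequality
  set K := ∫ s in (0:ℝ)..ε, ‖v' s‖ ^ 2 with hKdef
  have hvbound : ∀ t ∈ Set.Icc (0:ℝ) ε, ‖v t‖ ^ 2 ≤ t * K := by
    intro t ht
    have hsub : Set.Icc (0:ℝ) t ⊆ Set.Icc 0 ε := Set.Icc_subset_Icc_right ht.2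
    have hftc : (∫ s in (0:ℝ)..t, v' s) = v t - v 0 :=
      aux_ftc ht.1 (fun s hs => (hv s (hsub hs)).mono hsub) (hv'.mono hsub)
    have h1 : ‖v t‖ ≤ ∫ s in (0:ℝ)..t, ‖v' s‖ := by
      rw [hv0, sub_zero] at hftc
      rw [← hftc]
      exact intervalIntegral.norm_integral_le_integral_norm ht.1
    have h2 : (∫ s in (0:ℝ)..t, ‖v' s‖) ^ 2 ≤ t * ∫ s in (0:ℝ)..t, ‖v' s‖ ^ 2 :=
      aux_cs _ t ht.1 ((hv'.mono hsub).norm)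
    have h3 : (∫ s in (0:ℝ)..t, ‖v' s‖ ^ 2) ≤ K := by
      have hi1 : IntervalIntegrable (fun s => ‖v' s‖ ^ 2) MeasureTheory.volume 0 t :=
        iv'.mono_set (by rw [huIcc, Set.uIcc_of_le ht.1]; exact hsub)
      have hi2 : IntervalIntegrable (fun s => ‖v' s‖ ^ 2) MeasureTheory.volume t ε :=
        iv'.mono_set (by
          rw [huIcc, Set.uIcc_of_le ht.2]
          exact Set.Icc_subset_Icc_left ht.1)
      have hadd := intervalIntegral.integral_add_adjacent_intervals hi1 hi2
      have hpos : 0 ≤ ∫ s in t..ε, ‖v' s‖ ^ 2 :=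
        intervalIntegral.integral_nonneg ht.2 (fun s _ => sq_nonneg _)
      rw [hKdef, ← hadd]
      linarith
    have h4 : ‖v t‖ ^ 2 ≤ (∫ s in (0:ℝ)..t, ‖v' s‖) ^ 2 :=
      pow_le_pow_left₀ (norm_nonneg _) h1 2
    calc ‖v t‖ ^ 2 ≤ (∫ s in (0:ℝ)..t, ‖v' s‖) ^ 2 := h4
      _ ≤ t * ∫ s in (0:ℝ)..t, ‖v' s‖ ^ 2 := h2
      _ ≤ t * K := mul_le_mul_of_nonneg_left h3 ht.1
  have hpoin : (∫ t in (0:ℝ)..ε, ‖v t‖ ^ 2) ≤ ε ^ 2 / 2 * K := by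
    have hmono : (∫ t in (0:ℝ)..ε, ‖v t‖ ^ 2) ≤ ∫ t in (0:ℝ)..ε, t * K := by
      apply intervalIntegral.integral_mono_on hε' iv
        ((intervalIntegral.intervalIntegrable_id).mul_const K) hvbound
    have hid : (∫ t in (0:ℝ)..ε, t * K) = ε ^ 2 / 2 * K := by
      rw [intervalIntegral.integral_mul_const, integral_id]
      ring
    linarith
  -- combine everything
  have hK0 : 0 ≤ K := intervalIntegral.integral_nonneg hε' (fun s _ => sq_nonneg _)
  have hIu0 : 0 ≤ ∫ t in (0:ℝ)..ε, ‖u t‖ ^ 2 :=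
    intervalIntegral.integral_nonneg hε' (fun s _ => sq_nonneg _)
  have hIv0 : 0 ≤ ∫ t in (0:ℝ)..ε, ‖v t‖ ^ 2 :=
    intervalIntegral.integral_nonneg hε' (fun s _ => sq_nonneg _)
  have hdsplit : (∫ t in (0:ℝ)..ε, (‖u t‖ ^ 2 + ‖v t‖ ^ 2))
      = (∫ t in (0:ℝ)..ε, ‖u t‖ ^ 2) + ∫ t in (0:ℝ)..ε, ‖v t‖ ^ 2 :=
    intervalIntegral.integral_add iu iv
  set Iu := ∫ t in (0:ℝ)..ε, ‖u t‖ ^ 2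
  set Iv := ∫ t in (0:ℝ)..ε, ‖v t‖ ^ 2
  set m := min lam (2 / ε ^ 2) with hm
  have hKIv : (2 / ε ^ 2) * Iv ≤ K := by
    have hε2 : (0:ℝ) < ε ^ 2 := pow_pos hε 2
    rw [div_mul_eq_mul_div, div_le_iff₀ hε2]
    nlinarith [hpoin]
  have hm1 : m ≤ lam := min_le_left _ _
  have hm2 : m ≤ 2 / ε ^ 2 := min_le_right _ _
  have hfin1 : m * Iu ≤ lam * Iu := mul_le_mul_of_nonneg_right hm1 hIu0
  have hfin2 : m * Iv ≤ (2 / ε ^ 2) * Iv := mul_le_mul_of_nonneg_right hm2 hIv0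
  rw [hnum, hdsplit]
  calc m * (Iu + Iv) = m * Iu + m * Iv := by ring
    _ ≤ lam * Iu + K := by linarith
    _ ≤ _ := by rw [← hsplit] at *; linarith [hA, hsplit]

/-- Two-sided eigenvalue estimate for the model Dirac operator: if `λ` is the first
eigenvalue of `S*S` (i.e. `λ‖w‖² ≤ ‖S w‖²` for all `w` and `λ` is attained by some
eigenvector `u₀ ≠ 0`), and `λ_D` is the infimum of the Rayleigh quotients of the model
Dirac operator over pairs `(u, v)` continuously differentiable on `[0, ε]` with
`v 0 = v ε = 0`, then `λ ≥ λ_D ≥ min(λ, 2/ε²)`; in particular `λ_D = λ` when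
`ε² ≤ 2/λ`. -/
theorem dirac_two_sided_eigenvalue_estimate
    {H₁ H₂ : Type*} [NormedAddCommGroup H₁] [InnerProductSpace ℝ H₁] [CompleteSpace H₁]
    [NormedAddCommGroup H₂] [InnerProductSpace ℝ H₂] [CompleteSpace H₂]
    (S : H₁ →L[ℝ] H₂) (Sstar : H₂ →L[ℝ] H₁)
    (hadj : ∀ (w : H₁) (y : H₂), ⟪S w, y⟫ = ⟪w, Sstar y⟫)
    (ε : ℝ) (hε : 0 < ε)
    (lam : ℝ) (hlam : 0 ≤ lam)
    (hlow : ∀ w : H₁, lam * ‖w‖ ^ 2 ≤ ‖S w‖ ^ 2)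
    (u₀ : H₁) (hu₀ : u₀ ≠ 0) (heig : Sstar (S u₀) = lam • u₀)
    (lamD : ℝ)
    (hlamD : lamD = sInf {q : ℝ |
      ∃ (u u' : ℝ → H₁) (v v' : ℝ → H₂),
        (∀ t ∈ Set.Icc (0 : ℝ) ε, HasDerivWithinAt u (u' t) (Set.Icc 0 ε) t) ∧
        ContinuousOn u' (Set.Icc 0 ε) ∧
        (∀ t ∈ Set.Icc (0 : ℝ) ε, HasDerivWithinAt v (v' t) (Set.Icc 0 ε) t) ∧
        ContinuousOn v' (Set.Icc 0 ε) ∧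
        v 0 = 0 ∧ v ε = 0 ∧
        (∫ t in (0:ℝ)..ε, (‖u t‖ ^ 2 + ‖v t‖ ^ 2)) ≠ 0 ∧
        q = (∫ t in (0:ℝ)..ε, (‖u' t + Sstar (v t)‖ ^ 2 + ‖v' t + S (u t)‖ ^ 2)) /
            (∫ t in (0:ℝ)..ε, (‖u t‖ ^ 2 + ‖v t‖ ^ 2))}) :
    lam ≥ lamD ∧ lamD ≥ min lam (2 / ε ^ 2) ∧ (ε ^ 2 ≤ 2 / lam → lamD = lam) := by
  set Q : Set ℝ := {q : ℝ |
      ∃ (u u' : ℝ → H₁) (v v' : ℝ → H₂),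
        (∀ t ∈ Set.Icc (0 : ℝ) ε, HasDerivWithinAt u (u' t) (Set.Icc 0 ε) t) ∧
        ContinuousOn u' (Set.Icc 0 ε) ∧
        (∀ t ∈ Set.Icc (0 : ℝ) ε, HasDerivWithinAt v (v' t) (Set.Icc 0 ε) t) ∧
        ContinuousOn v' (Set.Icc 0 ε) ∧
        v 0 = 0 ∧ v ε = 0 ∧
        (∫ t in (0:ℝ)..ε, (‖u t‖ ^ 2 + ‖v t‖ ^ 2)) ≠ 0 ∧
        q = (∫ t in (0:ℝ)..ε, (‖u' t + Sstar (v t)‖ ^ 2 + ‖v' t + S (u t)‖ ^ 2)) /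
            (∫ t in (0:ℝ)..ε, (‖u t‖ ^ 2 + ‖v t‖ ^ 2))} with hQ
  have hε' : (0:ℝ) ≤ ε := hε.le
  set m := min lam (2 / ε ^ 2) with hm
  -- every element of Q is at least m
  have hbound : ∀ q ∈ Q, m ≤ q := by
    rintro q ⟨u, u', v, v', hu, hu', hv, hv', hv0, hvε, hD, hq⟩
    have hD0 : 0 ≤ ∫ t in (0:ℝ)..ε, (‖u t‖ ^ 2 + ‖v t‖ ^ 2) :=
      intervalIntegral.integral_nonneg hε'
        (fun t _ => add_nonneg (sq_nonneg _) (sq_nonneg _))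
    have hDpos : 0 < ∫ t in (0:ℝ)..ε, (‖u t‖ ^ 2 + ‖v t‖ ^ 2) := hD0.lt_of_ne' hD
    have hN := aux_lower_bound S Sstar hadj ε hε lam hlow u u' v v' hu hu' hv hv' hv0 hvε
    rw [hq, le_div_iff₀ hDpos]
    exact hN
  -- lam belongs to Q
  have hnorm : ‖S u₀‖ ^ 2 = lam * ‖u₀‖ ^ 2 := by
    have h1 : ⟪S u₀, S u₀⟫ = ⟪u₀, Sstar (S u₀)⟫ := hadj u₀ (S u₀)
    rw [heig, real_inner_smul_right, real_inner_self_eq_norm_sq,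
      real_inner_self_eq_norm_sq] at h1
    exact h1
  have hden : (∫ t in (0:ℝ)..ε, (‖u₀‖ ^ 2 + ‖(0:H₂)‖ ^ 2)) = ε * ‖u₀‖ ^ 2 := by
    rw [intervalIntegral.integral_const]
    simp
  have hu₀norm : ‖u₀‖ ^ 2 ≠ 0 := by
    simpa using pow_ne_zero 2 (norm_ne_zero_iff.mpr hu₀)
  have hmem : lam ∈ Q := by
    refine ⟨fun _ => u₀, fun _ => 0, fun _ => 0, fun _ => 0,
      fun t _ => hasDerivWithinAt_const _ _ _, continuousOn_const,
      fun t _ => hasDerivWithinAt_const _ _ _, continuousOn_const, rfl, rfl, ?_, ?_⟩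
    · rw [hden]
      exact mul_ne_zero hε.ne' hu₀norm
    · have hnumint : (∫ t in (0:ℝ)..ε,
          (‖(0:H₁) + Sstar (0:H₂)‖ ^ 2 + ‖(0:H₂) + S u₀‖ ^ 2)) = ε * (lam * ‖u₀‖ ^ 2) := by
        simp only [map_zero, add_zero, zero_add, norm_zero]
        rw [intervalIntegral.integral_const]
        simp [hnorm]
      rw [hnumint, hden]
      rw [show ε * (lam * ‖u₀‖ ^ 2) = lam * (ε * ‖u₀‖ ^ 2) by ring,
        mul_div_assoc, div_self (mul_ne_zero hε.ne' hu₀norm), mul_one]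
  have hBdd : BddBelow Q := ⟨m, fun q hq => hbound q hq⟩
  have h1 : lamD ≤ lam := by
    rw [hlamD]
    exact csInf_le hBdd hmem
  have h2 : m ≤ lamD := by
    rw [hlamD]
    exact le_csInf ⟨lam, hmem⟩ hbound
  refine ⟨h1, h2, ?_⟩
  intro hsq
  have hle : lam ≤ 2 / ε ^ 2 := by
    rcases hlam.eq_or_lt with h | h
    · rw [← h]; positivity
    · have hε2 : (0:ℝ) < ε ^ 2 := pow_pos hε 2
      rw [le_div_iff₀ hε2]
      have := (le_div_iff₀ h).mp hsq
      linarith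
  have hmlam : m = lam := min_eq_left hle
  rw [hmlam] at h2
  exact le_antisymm h1 h2
end

section
/- Kernel rigidity for the model Dirac operator with Dirichlet boundary condition: let H₁ and H₂ be real Hilbert spaces, S : H₁ → H₂ a continuous linear map with adjoint S*, and ε > 0. Let u : ℝ → H₁ and v : ℝ → H₂ be twice continuously differentiable on [0, ε] and satisfy the system u'(t) + S* v(t) = 0 and v'(t) + S u(t) = 0 for all t ∈ [0, ε], together with the boundary conditions v(0) = v(ε) = 0. Then v(t) = 0 for all t ∈ [0, ε], u is constant on [0, ε], and S u(t) = 0 for all t ∈ [0, ε]. In particular, the kernel of the model Dirac operator with these boundary conditions is trivial if and only if the kernel of S is trivial. -/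
open scoped RealInnerProductSpace

/-- Kernel rigidity for the model Dirac operator with Dirichlet boundary condition:
if `(u, v)` is twice continuously differentiable on `[0, ε]`, solves the complexified
Cauchy–Riemann system `u' + S* v = 0`, `v' + S u = 0` on `[0, ε]`, and `v 0 = v ε = 0`,
then `v ≡ 0`, `u` is constant on `[0, ε]`, and `S u ≡ 0` on `[0, ε]`. -/
theorem dirac_kernel_rigidity
    {H₁ H₂ : Type*} [NormedAddCommGroup H₁] [InnerProductSpace ℝ H₁] [CompleteSpace H₁]
    [NormedAddCommGroup H₂] [InnerProductSpace ℝ H₂] [CompleteSpace H₂]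
    (S : H₁ →L[ℝ] H₂) (Sstar : H₂ →L[ℝ] H₁)
    (hadj : ∀ (w : H₁) (y : H₂), ⟪S w, y⟫ = ⟪w, Sstar y⟫)
    (ε : ℝ) (hε : 0 < ε)
    (u u' u'' : ℝ → H₁) (v v' v'' : ℝ → H₂)
    (hu : ∀ t ∈ Set.Icc (0 : ℝ) ε, HasDerivWithinAt u (u' t) (Set.Icc 0 ε) t)
    (hu' : ∀ t ∈ Set.Icc (0 : ℝ) ε, HasDerivWithinAt u' (u'' t) (Set.Icc 0 ε) t)
    (hu'' : ContinuousOn u'' (Set.Icc 0 ε))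
    (hv : ∀ t ∈ Set.Icc (0 : ℝ) ε, HasDerivWithinAt v (v' t) (Set.Icc 0 ε) t)
    (hv' : ∀ t ∈ Set.Icc (0 : ℝ) ε, HasDerivWithinAt v' (v'' t) (Set.Icc 0 ε) t)
    (hv'' : ContinuousOn v'' (Set.Icc 0 ε))
    (heq1 : ∀ t ∈ Set.Icc (0 : ℝ) ε, u' t + Sstar (v t) = 0)
    (heq2 : ∀ t ∈ Set.Icc (0 : ℝ) ε, v' t + S (u t) = 0)
    (hv0 : v 0 = 0) (hvε : v ε = 0) :
    (∀ t ∈ Set.Icc (0 : ℝ) ε, v t = 0) ∧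
    (∀ s ∈ Set.Icc (0 : ℝ) ε, ∀ t ∈ Set.Icc (0 : ℝ) ε, u s = u t) ∧
    (∀ t ∈ Set.Icc (0 : ℝ) ε, S (u t) = 0) := by
  have huniq : UniqueDiffOn ℝ (Set.Icc (0:ℝ) ε) := uniqueDiffOn_Icc hε
  have h0mem : (0:ℝ) ∈ Set.Icc (0:ℝ) ε := ⟨le_refl _, le_of_lt hε⟩
  have hεmem : ε ∈ Set.Icc (0:ℝ) ε := ⟨le_of_lt hε, le_refl _⟩
  -- second derivative of v
  have hv''eq : ∀ t ∈ Set.Icc (0:ℝ) ε, v'' t = S (Sstar (v t)) := by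
    intro t ht
    have h1 : HasDerivWithinAt (fun s => -(S (u s))) (-(S (u' t))) (Set.Icc 0 ε) t :=
      ((S.hasFDerivAt.comp_hasDerivWithinAt t (hu t ht))).neg
    have h2 : HasDerivWithinAt v' (-(S (u' t))) (Set.Icc 0 ε) t := by
      apply h1.congr
      · intro y hy
        have := heq2 y hy
        linear_combination (norm := abel) this
      · have := heq2 t ht
        linear_combination (norm := abel) this
    have := (hv' t ht).derivWithin (huniq t ht)
    rw [← this, h2.derivWithin (huniq t ht)]
    have hu't : u' t = -(Sstar (v t)) := by
      have := heq1 t ht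
      linear_combination (norm := abel) this
    rw [hu't]
    simp
  -- the energy function
  set φ : ℝ → ℝ := fun t => ⟪v t, v t⟫ with hφdef
  set φ' : ℝ → ℝ := fun t => ⟪v t, v' t⟫ + ⟪v' t, v t⟫ with hφ'def
  set φ'' : ℝ → ℝ := fun t =>
    (⟪v t, v'' t⟫ + ⟪v' t, v' t⟫) + (⟪v' t, v' t⟫ + ⟪v'' t, v t⟫) with hφ''def
  have hφderiv : ∀ t ∈ Set.Icc (0:ℝ) ε, HasDerivWithinAt φ (φ' t) (Set.Icc 0 ε) t :=
    fun t ht => (hv t ht).inner ℝ (hv t ht)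
  have hφ'deriv : ∀ t ∈ Set.Icc (0:ℝ) ε, HasDerivWithinAt φ' (φ'' t) (Set.Icc 0 ε) t :=
    fun t ht => ((hv t ht).inner ℝ (hv' t ht)).add ((hv' t ht).inner ℝ (hv t ht))
  have hintsub : Set.Ioo (0:ℝ) ε ⊆ Set.Icc 0 ε := Set.Ioo_subset_Icc_self
  have hnhds : ∀ t ∈ Set.Ioo (0:ℝ) ε, Set.Icc (0:ℝ) ε ∈ nhds t := fun t ht =>
    mem_nhds_iff.2 ⟨Set.Ioo 0 ε, hintsub, isOpen_Ioo, ht⟩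
  have hφat : ∀ t ∈ Set.Ioo (0:ℝ) ε, HasDerivAt φ (φ' t) t := fun t ht =>
    (hφderiv t (hintsub ht)).hasDerivAt (hnhds t ht)
  have hφ'at : ∀ t ∈ Set.Ioo (0:ℝ) ε, HasDerivAt φ' (φ'' t) t := fun t ht =>
    (hφ'deriv t (hintsub ht)).hasDerivAt (hnhds t ht)
  have hderivφ : Set.EqOn (deriv φ) φ' (Set.Ioo 0 ε) := fun t ht => (hφat t ht).deriv
  have hconv : ConvexOn ℝ (Set.Icc (0:ℝ) ε) φ := by
    apply convexOn_of_deriv2_nonneg (convex_Icc 0 ε)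
    · exact fun t ht => (hφderiv t ht).continuousWithinAt
    · rw [interior_Icc]
      exact fun t ht => ((hφat t ht).differentiableAt).differentiableWithinAt
    · rw [interior_Icc]
      intro t ht
      have heq : deriv φ =ᶠ[nhds t] φ' :=
        (isOpen_Ioo.eventually_mem ht).mono fun y hy => hderivφ hy
      exact ((hφ'at t ht).congr_of_eventuallyEq heq).differentiableAt.differentiableWithinAt
    · rw [interior_Icc]
      intro t ht
      have hd2 : deriv (deriv φ) t = φ'' t := by
        have heq : deriv φ =ᶠ[nhds t] φ' :=
          (isOpen_Ioo.eventually_mem ht).mono fun y hy => hderivφ hy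
        rw [heq.deriv_eq, (hφ'at t ht).deriv]
      have : deriv^[2] φ t = φ'' t := by
        simpa [Function.iterate_succ, Function.iterate_one] using hd2
      rw [this]
      simp only [hφ''def]
      have hvv : v'' t = S (Sstar (v t)) := hv''eq t (hintsub ht)
      have h1 : ⟪v t, v'' t⟫ = ⟪Sstar (v t), Sstar (v t)⟫ := by
        rw [hvv, real_inner_comm, hadj]
      have h2 : ⟪v'' t, v t⟫ = ⟪Sstar (v t), Sstar (v t)⟫ := by
        rw [hvv, hadj]
      rw [h1, h2]

      have := real_inner_self_nonneg (x := Sstar (v t))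
      have := real_inner_self_nonneg (x := v' t)
      nlinarith [real_inner_self_nonneg (x := Sstar (v t)),
        real_inner_self_nonneg (x := v' t)]
  -- v vanishes
  have hvzero : ∀ t ∈ Set.Icc (0:ℝ) ε, v t = 0 := by
    intro t ht
    have hφ0 : φ 0 = 0 := by simp [hφdef, hv0]
    have hφε : φ ε = 0 := by simp [hφdef, hvε]
    have hle : φ t ≤ 0 := by
      have ha : (0:ℝ) ≤ 1 - t / ε := by
        have := ht.2
        have : t / ε ≤ 1 := (div_le_one hε).2 this
        linarith
      have hb : (0:ℝ) ≤ t / ε := div_nonneg ht.1 (le_of_lt hε)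
      have hab : (1 - t / ε) + t / ε = 1 := by ring
      have := hconv.2 h0mem hεmem ha hb hab
      have hcomb : (1 - t / ε) • (0:ℝ) + (t / ε) • ε = t := by
        field_simp
        simp only [smul_eq_mul, mul_zero, zero_add]
        exact div_mul_cancel₀ t hε.ne'
      rw [hcomb, hφ0, hφε] at this
      simpa using this
    have hge : (0:ℝ) ≤ φ t := real_inner_self_nonneg
    have : φ t = 0 := le_antisymm hle hge
    exact inner_self_eq_zero.mp this
  refine ⟨hvzero, ?_, ?_⟩
  · -- u constant
    have hu'zero : ∀ t ∈ Set.Icc (0:ℝ) ε, u' t = 0 := by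
      intro t ht
      have := heq1 t ht
      rw [hvzero t ht] at this
      simpa using this
    intro s hs t ht
    have hdiff : DifferentiableOn ℝ u (Set.Icc (0:ℝ) ε) := fun x hx =>
      (hu x hx).differentiableWithinAt
    have hfz : ∀ x ∈ Set.Icc (0:ℝ) ε, fderivWithin ℝ u (Set.Icc 0 ε) x = 0 := by
      intro x hx
      have h := hu x hx
      rw [hu'zero x hx] at h
      have := h.hasFDerivWithinAt.fderivWithin (huniq x hx)
      rw [this]
      ext y
      simp
    exact (convex_Icc 0 ε).is_const_of_fderivWithin_eq_zero hdiff hfz hs ht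
  · -- S u vanishes
    intro t ht
    have hv'zero : v' t = 0 := by
      have hc : HasDerivWithinAt v 0 (Set.Icc (0:ℝ) ε) t := by
        apply (hasDerivWithinAt_const t (Set.Icc (0:ℝ) ε) (0 : H₂)).congr
        · exact fun y hy => hvzero y hy
        · exact hvzero t ht
      have h1 := (hv t ht).derivWithin (huniq t ht)
      have h2 := hc.derivWithin (huniq t ht)
      rw [← h1, h2]
    have := heq2 t ht
    rw [hv'zero] at this
    simpa using this
end
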